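/- Stability of the D2Q7 shallow water model (Proposition 2): let h̄ > 0, e > 0, τ > 0 and 0 < g < e²/(2h̄). Let A be the 7×7 matrix with A_{0j} = (e² − 2gh̄)/e² for all j and A_{ij} = gh̄/(3e²) + (ξ_i·ξ_j)/(3e²) for i = 1,…,6, and set J = (A − I₇)/τ. Then there exist an invertible real matrix P ∈ ℝ^{7×7} and reals λ₁,…,λ₇ with λ₁ = λ₂ = λ₃ = 0 and λ_i > 0 for i = 4,…,7, such that PᵀP is a diagonal matrix and P·J = −diag(λ₁,…,λ₇)·P. -/

import Mathlib

set_option maxHeartbeats 1600000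

/-- Dot product on `ℝ × ℝ`. -/
def pdot (a b : ℝ × ℝ) : ℝ := a.1 * b.1 + a.2 * b.2

/-- The D2Q7 lattice velocities with lattice speed `e`. -/
noncomputable def xi7 (e : ℝ) : Fin 7 → ℝ × ℝ :=
  ![(0, 0), (e, 0), (e / 2, e * Real.sqrt 3 / 2), (-e / 2, e * Real.sqrt 3 / 2),
    (-e, 0), (-e / 2, -(e * Real.sqrt 3 / 2)), (e / 2, -(e * Real.sqrt 3 / 2))]

/-- The Jacobian of the D2Q7 equilibrium distribution at the rest state `(h̄, 0)`. -/
noncomputable def A7 (g e hb : ℝ) : Matrix (Fin 7) (Fin 7) ℝ :=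
  Matrix.of fun i j =>
    if i = 0 then (e ^ 2 - 2 * g * hb) / e ^ 2
    else g * hb / (3 * e ^ 2) + pdot (xi7 e i) (xi7 e j) / (3 * e ^ 2)

/-- Coefficient table for the circulant part of `A7`. -/
noncomputable def ccD2Q7 (n : ℕ) : ℝ :=
  if n = 0 then 1/3 else if n = 1 then 1/6 else if n = 2 then -(1/6)
  else if n = 3 then -(1/3) else if n = 4 then -(1/6) else 1/6

/-- Abstract form of `A7`, with `b = g h̄ / (3 e²)`. -/
noncomputable def aMatD2Q7 (b : ℝ) : Matrix (Fin 7) (Fin 7) ℝ :=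
  Matrix.of fun i j =>
    if i = 0 then 1 - 6 * b
    else if j = 0 then b
    else b + ccD2Q7 ((i.val + 6 - j.val) % 6)

/-- The diagonalizing matrix `P`; here `sa = √(1-6b)`, `sb = √b`, `s2 = √2`, `s3 = √3`. -/
noncomputable def pMatD2Q7 (b sa sb s2 s3 : ℝ) : Matrix (Fin 7) (Fin 7) ℝ :=
  Matrix.of fun i j =>
    if i = 0 then sa * s2 * s3 * sb
    else if i = 1 then
      (if j = 0 then 0 else if j = 1 then sa * s2 else if j = 2 then sa * s2 / 2
       else if j = 3 then -(sa * s2) / 2 else if j = 4 then -(sa * s2)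
       else if j = 5 then -(sa * s2) / 2 else sa * s2 / 2)
    else if i = 2 then
      (if j = 0 then 0 else if j = 1 then 0 else if j = 2 then sa * s2 * s3 / 2
       else if j = 3 then sa * s2 * s3 / 2 else if j = 4 then 0
       else if j = 5 then -(sa * s2 * s3) / 2 else -(sa * s2 * s3) / 2)
    else if i = 3 then
      (if j = 0 then 0 else if j = 1 then sa * s2 else if j = 2 then -(sa * s2) / 2
       else if j = 3 then -(sa * s2) / 2 else if j = 4 then sa * s2
       else if j = 5 then -(sa * s2) / 2 else -(sa * s2) / 2)
    else if i = 4 then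
      (if j = 0 then 0 else if j = 1 then 0 else if j = 2 then sa * s2 * s3 / 2
       else if j = 3 then -(sa * s2 * s3) / 2 else if j = 4 then 0
       else if j = 5 then sa * s2 * s3 / 2 else -(sa * s2 * s3) / 2)
    else if i = 5 then
      (if j = 0 then 0 else if j = 1 then sa else if j = 2 then -sa
       else if j = 3 then sa else if j = 4 then -sa
       else if j = 5 then sa else -sa)
    else
      (if j = 0 then -(6 * b) else 1 - 6 * b)

lemma A7_eq_aMat (g e hb : ℝ) (he : e ≠ 0) :
    A7 g e hb = aMatD2Q7 (g * hb / (3 * e ^ 2)) := by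
  have h3 : Real.sqrt 3 ^ 2 = 3 := Real.sq_sqrt (by norm_num)
  have hx0 : xi7 e 0 = (0, 0) := rfl
  have hx1 : xi7 e 1 = (e, 0) := rfl
  have hx2 : xi7 e 2 = (e / 2, e * Real.sqrt 3 / 2) := rfl
  have hx3 : xi7 e 3 = (-e / 2, e * Real.sqrt 3 / 2) := rfl
  have hx4 : xi7 e 4 = (-e, 0) := rfl
  have hx5 : xi7 e 5 = (-e / 2, -(e * Real.sqrt 3 / 2)) := rfl
  have hx6 : xi7 e 6 = (e / 2, -(e * Real.sqrt 3 / 2)) := rfl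
  have hv0 : ((0 : Fin 7) : ℕ) = 0 := rfl
  have hv1 : ((1 : Fin 7) : ℕ) = 1 := rfl
  have hv2 : ((2 : Fin 7) : ℕ) = 2 := rfl
  have hv3 : ((3 : Fin 7) : ℕ) = 3 := rfl
  have hv4 : ((4 : Fin 7) : ℕ) = 4 := rfl
  have hv5 : ((5 : Fin 7) : ℕ) = 5 := rfl
  have hv6 : ((6 : Fin 7) : ℕ) = 6 := rfl
  ext i j
  fin_cases i <;> fin_cases j <;>
    simp [A7, aMatD2Q7, ccD2Q7, pdot, hx0, hx1, hx2, hx3, hx4, hx5, hx6,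
      hv0, hv1, hv2, hv3, hv4, hv5, hv6] <;>
    field_simp <;> ring_nf <;> simp [h3] <;> ring_nf

lemma pMat_orth (b sa sb s2 s3 : ℝ) (h2 : s2 ^ 2 = 2) (h3 : s3 ^ 2 = 3)
    (hsa : sa ^ 2 = 1 - 6 * b) (hsb : sb ^ 2 = b) :
    (pMatD2Q7 b sa sb s2 s3).transpose * pMatD2Q7 b sa sb s2 s3 =
      Matrix.diagonal (fun i => if i = 0 then 6 * b else 6 - 36 * b) := by
  ext i j
  fin_cases i <;> fin_cases j <;>
    simp [pMatD2Q7, Matrix.mul_apply, Fin.sum_univ_seven, Matrix.diagonal] <;>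
    ring_nf <;> simp [h2, h3, hsa, hsb] <;> ring_nf

lemma pMat_eig (b sa sb s2 s3 : ℝ) :
    pMatD2Q7 b sa sb s2 s3 * aMatD2Q7 b =
      Matrix.of (fun i j : Fin 7 => if (i : ℕ) < 3 then pMatD2Q7 b sa sb s2 s3 i j else 0) := by
  have hv0 : ((0 : Fin 7) : ℕ) = 0 := rfl
  have hv1 : ((1 : Fin 7) : ℕ) = 1 := rfl
  have hv2 : ((2 : Fin 7) : ℕ) = 2 := rfl
  have hv3 : ((3 : Fin 7) : ℕ) = 3 := rfl
  have hv4 : ((4 : Fin 7) : ℕ) = 4 := rfl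
  have hv5 : ((5 : Fin 7) : ℕ) = 5 := rfl
  have hv6 : ((6 : Fin 7) : ℕ) = 6 := rfl
  ext i j
  fin_cases i <;> fin_cases j <;>
    simp [pMatD2Q7, aMatD2Q7, ccD2Q7, Matrix.mul_apply, Fin.sum_univ_seven,
      hv0, hv1, hv2, hv3, hv4, hv5, hv6] <;>
    ring_nf

/-- Proposition 2: stability structure for the D2Q7 shallow water model. -/
theorem d2q7_stability (hb e g τ : ℝ) (hhb : 0 < hb) (he : 0 < e) (hτ : 0 < τ)
    (hg0 : 0 < g) (hg : g < e ^ 2 / (2 * hb)) :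
    ∃ (P : Matrix (Fin 7) (Fin 7) ℝ) (lam : Fin 7 → ℝ),
      IsUnit P ∧
      (∃ a : Fin 7 → ℝ, P.transpose * P = Matrix.diagonal a) ∧
      (∀ i : Fin 7, (i : ℕ) < 3 → lam i = 0) ∧
      (∀ i : Fin 7, 3 ≤ (i : ℕ) → 0 < lam i) ∧
      P * (τ⁻¹ • (A7 g e hb - 1)) = -(Matrix.diagonal lam) * P := by
  have he' : e ≠ 0 := ne_of_gt he
  have he2 : (0:ℝ) < e ^ 2 := by positivity
  set b : ℝ := g * hb / (3 * e ^ 2) with hbdef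
  have hbpos : 0 < b := by positivity
  have h2gh : 2 * g * hb < e ^ 2 := by
    rw [lt_div_iff₀ (by positivity)] at hg; nlinarith
  have h6b : 6 * b < 1 := by
    rw [hbdef]
    rw [show (6:ℝ) * (g * hb / (3 * e ^ 2)) = (2 * g * hb) / e ^ 2 by ring]
    rw [div_lt_one he2]; linarith
  have h1b : (0:ℝ) < 1 - 6 * b := by linarith
  set sa := Real.sqrt (1 - 6 * b) with hsadef
  set sb := Real.sqrt b with hsbdef
  have hsa : sa ^ 2 = 1 - 6 * b := Real.sq_sqrt h1b.le
  have hsb : sb ^ 2 = b := Real.sq_sqrt hbpos.le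
  have h2 : (Real.sqrt 2) ^ 2 = 2 := Real.sq_sqrt (by norm_num)
  have h3 : (Real.sqrt 3) ^ 2 = 3 := Real.sq_sqrt (by norm_num)
  have hPtP := pMat_orth b sa sb _ _ h2 h3 hsa hsb
  refine ⟨pMatD2Q7 b sa sb (Real.sqrt 2) (Real.sqrt 3),
    fun i => if (i : ℕ) < 3 then 0 else τ⁻¹, ?_, ⟨_, hPtP⟩, ?_, ?_, ?_⟩
  · -- IsUnit P
    have hb0 : (6 * b : ℝ) ≠ 0 := by positivity
    have hb1 : (6 - 36 * b : ℝ) ≠ 0 := by nlinarith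
    refine (Matrix.isUnit_iff_isUnit_det _).mpr <| Matrix.isUnit_det_of_left_inverse
      (B := Matrix.diagonal (fun i => (if i = 0 then 6 * b else 6 - 36 * b)⁻¹) *
        (pMatD2Q7 b sa sb (Real.sqrt 2) (Real.sqrt 3)).transpose) ?_
    rw [Matrix.mul_assoc, hPtP, Matrix.diagonal_mul_diagonal]
    have hfun : (fun i : Fin 7 =>
        (if i = 0 then 6 * b else 6 - 36 * b)⁻¹ * (if i = 0 then 6 * b else 6 - 36 * b)) =
        fun _ => (1:ℝ) := by
      funext i; by_cases hi : i = 0 <;> simp [hi] <;> field_simp <;> ring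
    rw [hfun, Matrix.diagonal_one]
  · intro i hi; simp [hi]
  · intro i hi
    have hlt : ¬ ((i : ℕ) < 3) := by omega
    simp [hlt]; positivity
  · -- eigen relation
    have hA : A7 g e hb = aMatD2Q7 b := A7_eq_aMat g e hb he'
    have hPA := pMat_eig b sa sb (Real.sqrt 2) (Real.sqrt 3)
    rw [hA, Matrix.mul_smul, Matrix.mul_sub, Matrix.mul_one, hPA]
    ext i j
    by_cases hi : (i : ℕ) < 3 <;>
      simp [Matrix.smul_apply, Matrix.sub_apply, Matrix.neg_mul, Matrix.diagonal_mul, hi]
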